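/- Let w : [0,∞) → ℝ be continuous, y ∈ H, let Y be the continuous H-valued solution of Y(t) = y + ∫₀ᵗ F(Y(s)) ds + (w(t),0,0), and for each N ≥ 1 let Y^{(N)} be the continuous H-valued solution of Y^{(N)}(t) = Π_N y + ∫₀ᵗ Π_N F(Y^{(N)}(s)) ds + (w(t),0,0). Then for every T > 0, there exist constants C > 0 and C(y,T) > 0 (depending only on (a_n), y and T) such that sup_{0≤t≤T} ‖Y^{(N)}(t) − Y(t)‖_H² ≤ (‖Π_N y − y‖_H² + C T Σ_{n>N} a_n) e^{C(y,T)}; in particular sup_{0≤t≤T} ‖Y^{(N)}(t) − Y(t)‖_H → 0 as N → ∞. -/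

import Mathlib

/-!
Write `D = Y⁽ᴺ⁾ - Y`. The forcing `w` cancels, so
`D t = (Π_N y - y) + ∫₀ᵗ (Π_N F(Y⁽ᴺ⁾ s) - F(Y s)) ds`.
The `(u, v)`-components of `F` are bounded by `(Σ aₙ)^{1/2}`, hence those of `Y⁽ᴺ⁾` grow at most
linearly, uniformly in `N`, although the `x`-component is driven by `w`. The drift is Lipschitz
with a constant depending only on the `(u, v)`-components of its first argument (this uses
`Σ aₙ n⁴ < ∞`, a consequence of `a ∈ O⁵`), and `‖Π_N F z - F z‖² ≤ 2 Σ_{n>N} aₙ`. So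
`‖D'‖ ≤ K ‖D‖ + (2 Σ_{n>N} aₙ)^{1/2}` on `[0, T]` and Grönwall's inequality gives the bound;
both `‖Π_N y - y‖` and `Σ_{n>N} aₙ` tend to `0`.
-/

noncomputable section

open scoped BigOperators RealInnerProductSpace
open MeasureTheory Filter

/-- The real Hilbert space ℓ² of square-summable sequences indexed by `n ≥ 1`. -/
abbrev l2 : Type := lp (fun _ : ℕ+ => ℝ) 2

/-- The real Hilbert space `H = ℝ × ℓ² × ℓ²` with
`‖(x,u,v)‖² = |x|² + ‖u‖² + ‖v‖²`. -/
abbrev Hsp : Type := WithLp 2 (ℝ × WithLp 2 (l2 × l2))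

/-- First (real) component of an element of `H`. -/
def Hx (y : Hsp) : ℝ := y.fst

/-- Second (ℓ²) component of an element of `H`. -/
def Hu (y : Hsp) : l2 := y.snd.fst

/-- Third (ℓ²) component of an element of `H`. -/
def Hv (y : Hsp) : l2 := y.snd.snd

/-- Build an element of `H` from its components. -/
def mkH (x : ℝ) (u v : l2) : Hsp := WithLp.toLp 2 (x, (WithLp.toLp 2 (u, v) : WithLp 2 (l2 × l2)))

/-- The sequence `(a_n)` belongs to `O⁵`, i.e. `Σ (1+n²)⁵ aₙ² < ∞`. -/
def MemO5 (a : ℕ+ → ℝ) : Prop :=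
  Summable fun n : ℕ+ => (1 + (n : ℝ) ^ 2) ^ 5 * a n ^ 2

/-- `F : H → H` is the drift map
`F(x,u,v) = (Σ √aₙ n (sin(nx) uₙ + cos(nx) vₙ), (√aₙ cos(nx))ₙ, (−√aₙ sin(nx))ₙ)`. -/
def IsDriftF (a : ℕ+ → ℝ) (F : Hsp → Hsp) : Prop :=
  ∀ y : Hsp,
    Hx (F y) = (∑' n : ℕ+, Real.sqrt (a n) * (n : ℝ) *
        (Real.sin ((n : ℝ) * Hx y) * Hu y n + Real.cos ((n : ℝ) * Hx y) * Hv y n)) ∧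
    (∀ n : ℕ+, Hu (F y) n = Real.sqrt (a n) * Real.cos ((n : ℝ) * Hx y)) ∧
    (∀ n : ℕ+, Hv (F y) n = -(Real.sqrt (a n) * Real.sin ((n : ℝ) * Hx y)))

/-- The Galerkin projections `Π_N (x,(uₙ)ₙ,(vₙ)ₙ) = (x,(u₁,…,u_N,0,…),(v₁,…,v_N,0,…))`. -/
def IsGalerkin (P : ℕ+ → Hsp → Hsp) : Prop :=
  ∀ (N : ℕ+) (y : Hsp),
    Hx (P N y) = Hx y ∧
    (∀ n : ℕ+, Hu (P N y) n = if n ≤ N then Hu y n else 0) ∧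
    (∀ n : ℕ+, Hv (P N y) n = if n ≤ N then Hv y n else 0)

open Set Topology
open scoped ENNReal

section Sequences

variable {ι : Type*}

lemma summable_abs_mul_of_summable_sq {f g : ι → ℝ} (hf : Summable fun i => f i ^ 2)
    (hg : Summable fun i => g i ^ 2) : Summable fun i => |f i * g i| := by
  simpa [abs_mul] using Real.summable_mul_of_Lp_Lq_of_nonneg Real.HolderConjugate.two_two
    (fun i => abs_nonneg (f i)) (fun i => abs_nonneg (g i)) (by simpa using hf) (by simpa using hg)

lemma tsum_abs_mul_le_sqrt_mul_sqrt {f g : ι → ℝ} (hf : Summable fun i => f i ^ 2)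
    (hg : Summable fun i => g i ^ 2) :
    ∑' i, |f i * g i| ≤ √(∑' i, f i ^ 2) * √(∑' i, g i ^ 2) := by
  simpa [abs_mul, Real.sqrt_eq_rpow] using Real.inner_le_Lp_mul_Lq_tsum_of_nonneg
    Real.HolderConjugate.two_two (fun i => abs_nonneg (f i)) (fun i => abs_nonneg (g i))
    (by simpa using hf) (by simpa using hg)

end Sequences

def tailSum (c : ℕ+ → ℝ) (N : ℕ+) : ℝ := ∑' n, if N < n then c n else 0

lemma summable_tail {c : ℕ+ → ℝ} (hc : Summable c) (N : ℕ+) :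
    Summable fun n => if N < n then c n else 0 :=
  (hc.indicator {n | N < n}).congr fun n => by simp [Set.indicator_apply]

lemma tailSum_nonneg {c : ℕ+ → ℝ} (hc : ∀ n, 0 ≤ c n) (N : ℕ+) : 0 ≤ tailSum c N :=
  tsum_nonneg fun n => by split_ifs <;> simp [hc]

lemma tailSum_mono {c d : ℕ+ → ℝ} (hc : Summable c) (hd : Summable d) (h : ∀ n, c n ≤ d n)
    (N : ℕ+) : tailSum c N ≤ tailSum d N :=
  Summable.tsum_le_tsum (fun n => by split_ifs <;> simp [h]) (summable_tail hc N)
    (summable_tail hd N)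

lemma tendsto_tailSum {c : ℕ+ → ℝ} (hc : Summable c) : Tendsto (tailSum c) atTop (𝓝 0) := by
  have hterm (n : ℕ+) : Tendsto (fun N : ℕ+ => if N < n then c n else 0) atTop (𝓝 0) :=
    tendsto_const_nhds.congr' <| (eventually_ge_atTop n).mono fun N hN => by
      simp [not_lt.2 hN]
  have h := tendsto_tsum_of_dominated_convergence (g := fun _ => 0) hc.abs hterm
    (Eventually.of_forall fun N n => by split_ifs <;> simp)
  rw [tsum_zero] at h
  exact h

namespace l2

lemma summable_sq (u : l2) : Summable fun n => u n ^ 2 := by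
  have h := (lp.memℓp u).summable (by norm_num : (0 : ℝ) < (2 : ℝ≥0∞).toReal)
  simpa [Real.rpow_natCast, sq_abs] using h

lemma norm_sq_eq_tsum (u : l2) : ‖u‖ ^ 2 = ∑' n, u n ^ 2 := by
  simpa [Real.rpow_natCast, sq_abs] using
    lp.norm_rpow_eq_tsum (by norm_num : (0 : ℝ) < (2 : ℝ≥0∞).toReal) u

lemma norm_le_sqrt_tsum {u : l2} {c : ℕ+ → ℝ} (hc : Summable c) (h : ∀ n, u n ^ 2 ≤ c n) :
    ‖u‖ ≤ √(∑' n, c n) := by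
  rw [← abs_norm]
  exact Real.abs_le_sqrt <| norm_sq_eq_tsum u ▸ Summable.tsum_le_tsum h (summable_sq u) hc

lemma norm_le_of_truncation {p q : l2} {N : ℕ+} (hq : ∀ n, q n = if n ≤ N then p n else 0) :
    ‖q‖ ≤ ‖p‖ := by
  refine (norm_le_sqrt_tsum (summable_sq p) fun n => ?_).trans_eq
    (by rw [← norm_sq_eq_tsum, Real.sqrt_sq (norm_nonneg p)])
  rw [hq]
  split_ifs <;> simp [sq_nonneg]

lemma norm_sub_sq_of_truncation {p q : l2} {N : ℕ+} (hq : ∀ n, q n = if n ≤ N then p n else 0) :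
    ‖q - p‖ ^ 2 = tailSum (fun n => p n ^ 2) N := by
  rw [norm_sq_eq_tsum, tailSum]
  refine tsum_congr fun n => ?_
  rw [lp.coeFn_sub, Pi.sub_apply, hq]
  by_cases h : n ≤ N
  · simp [h, not_lt.2 h]
  · simp [h, not_le.1 h]

end l2

section Hsp

@[simp] lemma Hx_sub (z z' : Hsp) : Hx (z - z') = Hx z - Hx z' := rfl
@[simp] lemma Hu_sub (z z' : Hsp) : Hu (z - z') = Hu z - Hu z' := rfl
@[simp] lemma Hv_sub (z z' : Hsp) : Hv (z - z') = Hv z - Hv z' := rfl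

lemma Hsp.norm_sq_eq (z : Hsp) : ‖z‖ ^ 2 = Hx z ^ 2 + ‖Hu z‖ ^ 2 + ‖Hv z‖ ^ 2 := by
  rw [WithLp.prod_norm_sq_eq_of_L2, WithLp.prod_norm_sq_eq_of_L2, Real.norm_eq_abs, sq_abs,
    ← add_assoc]
  rfl

lemma Hsp.abs_Hx_le (z : Hsp) : |Hx z| ≤ ‖z‖ :=
  abs_le_of_sq_le_sq (by nlinarith [Hsp.norm_sq_eq z, sq_nonneg ‖Hu z‖, sq_nonneg ‖Hv z‖])
    (norm_nonneg z)

lemma Hsp.norm_Hu_le (z : Hsp) : ‖Hu z‖ ≤ ‖z‖ :=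
  (sq_le_sq₀ (norm_nonneg _) (norm_nonneg _)).1 <| by
    nlinarith [Hsp.norm_sq_eq z, sq_nonneg (Hx z), sq_nonneg ‖Hv z‖]

lemma Hsp.norm_Hv_le (z : Hsp) : ‖Hv z‖ ≤ ‖z‖ :=
  (sq_le_sq₀ (norm_nonneg _) (norm_nonneg _)).1 <| by
    nlinarith [Hsp.norm_sq_eq z, sq_nonneg (Hx z), sq_nonneg ‖Hu z‖]

lemma Hsp.norm_le_abs_add_norm_add_norm (z : Hsp) : ‖z‖ ≤ |Hx z| + ‖Hu z‖ + ‖Hv z‖ :=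
  (sq_le_sq₀ (norm_nonneg _) (by positivity)).1 <| by
    nlinarith [Hsp.norm_sq_eq z, sq_abs (Hx z), abs_nonneg (Hx z), norm_nonneg (Hu z),
      norm_nonneg (Hv z)]

lemma Hsp.norm_le_norm_of_components {z z' : Hsp} (hx : |Hx z| ≤ |Hx z'|)
    (hu : ‖Hu z‖ ≤ ‖Hu z'‖) (hv : ‖Hv z‖ ≤ ‖Hv z'‖) : ‖z‖ ≤ ‖z'‖ :=
  (sq_le_sq₀ (norm_nonneg _) (norm_nonneg _)).1 <| by
    rw [Hsp.norm_sq_eq, Hsp.norm_sq_eq, ← sq_abs (Hx z), ← sq_abs (Hx z')]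
    gcongr

def HuL : Hsp →L[ℝ] l2 := (WithLp.fstL 2 ℝ l2 l2).comp (WithLp.sndL 2 ℝ ℝ (WithLp 2 (l2 × l2)))

def HvL : Hsp →L[ℝ] l2 := (WithLp.sndL 2 ℝ l2 l2).comp (WithLp.sndL 2 ℝ ℝ (WithLp 2 (l2 × l2)))

@[simp] lemma HuL_apply (z : Hsp) : HuL z = Hu z := rfl
@[simp] lemma HvL_apply (z : Hsp) : HvL z = Hv z := rfl

end Hsp

lemma summable_one_div_sq_pnat : Summable fun n : ℕ+ => 1 / (n : ℝ) ^ 2 :=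
  (Real.summable_one_div_nat_pow.2 one_lt_two).comp_injective PNat.coe_injective

lemma MemO5.summable_mul_sq_add_one_sq {a : ℕ+ → ℝ} (ha : ∀ n, 0 ≤ a n) (hO5 : MemO5 a) :
    Summable fun n : ℕ+ => a n * (1 + (n : ℝ) ^ 2) ^ 2 := by
  refine Summable.of_nonneg_of_le (fun n => mul_nonneg (ha n) (by positivity)) (fun n => ?_)
    (hO5.add summable_one_div_sq_pnat)
  have hn : (0 : ℝ) < n := by exact_mod_cast n.pos
  set m : ℝ := 1 + (n : ℝ) ^ 2
  have hm0 : 0 < m := by positivity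
  -- AM-GM: `m² a = (m^{5/2} a) · m^{-1/2} ≤ m⁵ a² + 1 / m`, and `1 / m ≤ 1 / n²`.
  have hm : 1 / m ≤ 1 / (n : ℝ) ^ 2 := one_div_le_one_div_of_le (by positivity) (by simp [m])
  have hamgm : a n * m ^ 2 ≤ m ^ 5 * a n ^ 2 + 1 / m := by
    rw [← sub_nonneg]
    have : m ^ 5 * a n ^ 2 + 1 / m - a n * m ^ 2 = ((m ^ 3 * a n - 1 / 2) ^ 2 + 3 / 4) / m := by
      field_simp
      ring
    rw [this]
    positivity
  linarith

lemma MemO5.summable_mul_pow {a : ℕ+ → ℝ} (ha : ∀ n, 0 ≤ a n) (hO5 : MemO5 a) {k : ℕ}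
    (hk : k ≤ 4) : Summable fun n : ℕ+ => a n * (n : ℝ) ^ k := by
  refine Summable.of_nonneg_of_le (fun n => mul_nonneg (ha n) (by positivity)) (fun n => ?_)
    (hO5.summable_mul_sq_add_one_sq ha)
  have hn : (1 : ℝ) ≤ n := Nat.one_le_cast.2 n.pos
  refine mul_le_mul_of_nonneg_left ?_ (ha n)
  calc (n : ℝ) ^ k ≤ (n : ℝ) ^ 4 := pow_le_pow_right₀ hn hk
    _ ≤ (1 + (n : ℝ) ^ 2) ^ 2 := by nlinarith

lemma MemO5.summable {a : ℕ+ → ℝ} (ha : ∀ n, 0 ≤ a n) (hO5 : MemO5 a) : Summable a := by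
  simpa using hO5.summable_mul_pow ha (k := 0) (by norm_num)

lemma sq_sqrt_mul_le {b t : ℝ} (hb : 0 ≤ b) (ht : |t| ≤ 1) : (√b * t) ^ 2 ≤ b := by
  rw [mul_pow, Real.sq_sqrt hb, ← sq_abs t]
  exact mul_le_of_le_one_right hb (pow_le_one₀ (abs_nonneg _) ht)

lemma abs_mul_sub_mul_le_of_lipschitz {φ : ℝ → ℝ} (hφ : LipschitzWith 1 φ)
    (hφ1 : ∀ t, |φ t| ≤ 1) (x x' u u' : ℝ) :
    |φ x * u - φ x' * u'| ≤ |x - x'| * |u| + |u - u'| := by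
  have hlip : |φ x - φ x'| ≤ |x - x'| := by simpa [Real.dist_eq] using hφ.dist_le_mul x x'
  calc |φ x * u - φ x' * u'| = |(φ x - φ x') * u + φ x' * (u - u')| := by congr 1; ring
    _ ≤ |φ x - φ x'| * |u| + |φ x'| * |u - u'| := by
      simpa only [abs_mul] using abs_add_le ((φ x - φ x') * u) (φ x' * (u - u'))
    _ ≤ |x - x'| * |u| + 1 * |u - u'| := by gcongr; exact hφ1 _
    _ = |x - x'| * |u| + |u - u'| := by rw [one_mul]

lemma abs_mul_sin_mul_add_cos_mul_le (c θ u v : ℝ) :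
    |c * (Real.sin θ * u + Real.cos θ * v)| ≤ |c * u| + |c * v| := by
  have hsu : |Real.sin θ * u| ≤ |u| := by
    rw [abs_mul]; exact mul_le_of_le_one_left (abs_nonneg _) (Real.abs_sin_le_one _)
  have hcv : |Real.cos θ * v| ≤ |v| := by
    rw [abs_mul]; exact mul_le_of_le_one_left (abs_nonneg _) (Real.abs_cos_le_one _)
  rw [abs_mul, abs_mul c u, abs_mul c v, ← mul_add]
  gcongr
  exact (abs_add_le _ _).trans (add_le_add hsu hcv)

lemma abs_mul_sin_mul_add_cos_mul_sub_le {c k : ℝ} (hc : 0 ≤ c) (hk : 0 ≤ k) (x x' u u' v v' : ℝ) :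
    |c * (Real.sin (k * x) * u + Real.cos (k * x) * v) -
        c * (Real.sin (k * x') * u' + Real.cos (k * x') * v')| ≤
      |x - x'| * (|c * k * u| + |c * k * v|) + (|c * (u - u')| + |c * (v - v')|) := by
  have hsin := abs_mul_sub_mul_le_of_lipschitz Real.lipschitzWith_sin Real.abs_sin_le_one
    (k * x) (k * x') u u'
  have hcos := abs_mul_sub_mul_le_of_lipschitz Real.lipschitzWith_cos Real.abs_cos_le_one
    (k * x) (k * x') v v'
  have hkx : |k * x - k * x'| = k * |x - x'| := by rw [← mul_sub, abs_mul, abs_of_nonneg hk]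
  rw [hkx] at hsin hcos
  calc _ = c * |(Real.sin (k * x) * u - Real.sin (k * x') * u') +
          (Real.cos (k * x) * v - Real.cos (k * x') * v')| := by
        rw [← mul_sub, abs_mul, abs_of_nonneg hc]; congr 2; ring
    _ ≤ c * ((k * |x - x'| * |u| + |u - u'|) + (k * |x - x'| * |v| + |v - v'|)) := by
        gcongr
        exact (abs_add_le _ _).trans (add_le_add hsin hcos)
    _ = _ := by
        simp only [abs_mul, abs_of_nonneg hc, abs_of_nonneg hk]
        ring

section Drift

variable {a : ℕ+ → ℝ} {F : Hsp → Hsp}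

lemma l2.norm_le_of_eq_sqrt_mul {u : l2} {φ : ℝ → ℝ} (ha : ∀ n, 0 ≤ a n) (hs : Summable a)
    (hφ : ∀ t, |φ t| ≤ 1) (x : ℝ) (hu : ∀ n, u n = √(a n) * φ (n * x)) :
    ‖u‖ ≤ √(∑' n, a n) :=
  l2.norm_le_sqrt_tsum hs fun n => hu n ▸ sq_sqrt_mul_le (ha n) (hφ _)

lemma l2.norm_sub_le_of_eq_sqrt_mul {u u' : l2} {φ : ℝ → ℝ} (ha : ∀ n, 0 ≤ a n)
    (hs : Summable fun n : ℕ+ => a n * (n : ℝ) ^ 2) (hφ : LipschitzWith 1 φ) (x x' : ℝ)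
    (hu : ∀ n, u n = √(a n) * φ (n * x)) (hu' : ∀ n, u' n = √(a n) * φ (n * x')) :
    ‖u - u'‖ ≤ √(∑' n : ℕ+, a n * (n : ℝ) ^ 2) * |x - x'| := by
  have hφ' (s t : ℝ) : |φ s - φ t| ≤ |s - t| := by
    simpa [Real.dist_eq] using hφ.dist_le_mul s t
  have key := l2.norm_le_sqrt_tsum (u := u - u') (hs.mul_right ((x - x') ^ 2)) fun n => by
    rw [lp.coeFn_sub, Pi.sub_apply, hu, hu', ← mul_sub, mul_pow, Real.sq_sqrt (ha n), mul_assoc,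
      ← mul_pow, ← sq_abs (φ _ - φ _), ← sq_abs (n * (x - x'))]
    refine mul_le_mul_of_nonneg_left (pow_le_pow_left₀ (abs_nonneg _) ?_ 2) (ha n)
    simpa [mul_sub] using hφ' (n * x) (n * x')
  rwa [tsum_mul_right, Real.sqrt_mul (tsum_nonneg fun n => mul_nonneg (ha n) (by positivity)),
    Real.sqrt_sq_eq_abs] at key

lemma l2.tsum_abs_mul_le {g : ℕ+ → ℝ} (hg : Summable fun n => g n ^ 2) (u : l2) :
    ∑' n, |g n * u n| ≤ √(∑' n, g n ^ 2) * ‖u‖ := by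
  simpa [← l2.norm_sq_eq_tsum] using tsum_abs_mul_le_sqrt_mul_sqrt hg (l2.summable_sq u)

lemma IsDriftF.abs_Hx_sub_le (hF : IsDriftF a F) (ha : ∀ n, 0 ≤ a n)
    (hs₂ : Summable fun n : ℕ+ => a n * (n : ℝ) ^ 2)
    (hs₄ : Summable fun n : ℕ+ => a n * (n : ℝ) ^ 4) (z z' : Hsp) :
    |Hx (F z) - Hx (F z')| ≤
      √(∑' n : ℕ+, a n * (n : ℝ) ^ 4) * (‖Hu z‖ + ‖Hv z‖) * |Hx z - Hx z'| +
        √(∑' n : ℕ+, a n * (n : ℝ) ^ 2) * (‖Hu z - Hu z'‖ + ‖Hv z - Hv z'‖) := by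
  set g₁ : ℕ+ → ℝ := fun n => √(a n) * n
  set g₂ : ℕ+ → ℝ := fun n => g₁ n * n
  have hg₁ (n : ℕ+) : g₁ n ^ 2 = a n * (n : ℝ) ^ 2 := by simp [g₁, mul_pow, Real.sq_sqrt (ha n)]
  have hg₂ (n : ℕ+) : g₂ n ^ 2 = a n * (n : ℝ) ^ 4 := by rw [mul_pow, hg₁]; ring
  have hs₁' : Summable fun n => g₁ n ^ 2 := by simpa only [hg₁] using hs₂
  have hs₂' : Summable fun n => g₂ n ^ 2 := by simpa only [hg₂] using hs₄
  set term : Hsp → ℕ+ → ℝ := fun z n => g₁ n *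
    (Real.sin (n * Hx z) * Hu z n + Real.cos (n * Hx z) * Hv z n)
  have summable_term (z : Hsp) : Summable (term z) :=
    Summable.of_norm_bounded ((summable_abs_mul_of_summable_sq hs₁' (l2.summable_sq (Hu z))).add
      (summable_abs_mul_of_summable_sq hs₁' (l2.summable_sq (Hv z))))
      fun n => abs_mul_sin_mul_add_cos_mul_le _ _ _ _
  set du := Hu z - Hu z'
  set dv := Hv z - Hv z'
  have hu₂ := summable_abs_mul_of_summable_sq hs₂' (l2.summable_sq (Hu z))
  have hv₂ := summable_abs_mul_of_summable_sq hs₂' (l2.summable_sq (Hv z))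
  have hdu₁ := summable_abs_mul_of_summable_sq hs₁' (l2.summable_sq du)
  have hdv₁ := summable_abs_mul_of_summable_sq hs₁' (l2.summable_sq dv)
  have hx := (hu₂.add hv₂).mul_left |Hx z - Hx z'|
  have huv := hdu₁.add hdv₁
  calc |Hx (F z) - Hx (F z')| = ‖∑' n, (term z n - term z' n)‖ := by
        rw [(hF z).1, (hF z').1, (summable_term z).tsum_sub (summable_term z'), Real.norm_eq_abs]
    _ ≤ ∑' n, (|Hx z - Hx z'| * (|g₂ n * Hu z n| + |g₂ n * Hv z n|) +
          (|g₁ n * du n| + |g₁ n * dv n|)) :=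
        tsum_of_norm_bounded (hx.add huv).hasSum fun n =>
          abs_mul_sin_mul_add_cos_mul_sub_le (by positivity) (Nat.cast_nonneg n) _ _ _ _ _ _
    _ = |Hx z - Hx z'| * (∑' n, |g₂ n * Hu z n| + ∑' n, |g₂ n * Hv z n|) +
          (∑' n, |g₁ n * du n| + ∑' n, |g₁ n * dv n|) := by
        rw [hx.tsum_add huv, tsum_mul_left, hu₂.tsum_add hv₂, hdu₁.tsum_add hdv₁]
    _ ≤ |Hx z - Hx z'| * (√(∑' n, g₂ n ^ 2) * ‖Hu z‖ + √(∑' n, g₂ n ^ 2) * ‖Hv z‖) +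
          (√(∑' n, g₁ n ^ 2) * ‖du‖ + √(∑' n, g₁ n ^ 2) * ‖dv‖) := by
        gcongr <;> exact l2.tsum_abs_mul_le (by assumption) _
    _ = _ := by simp only [hg₁, hg₂]; ring

lemma IsDriftF.norm_Hu_le (hF : IsDriftF a F) (ha : ∀ n, 0 ≤ a n) (hs : Summable a) (z : Hsp) :
    ‖Hu (F z)‖ ≤ √(∑' n, a n) :=
  l2.norm_le_of_eq_sqrt_mul ha hs Real.abs_cos_le_one (Hx z) (hF z).2.1

lemma IsDriftF.norm_Hv_le (hF : IsDriftF a F) (ha : ∀ n, 0 ≤ a n) (hs : Summable a) (z : Hsp) :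
    ‖Hv (F z)‖ ≤ √(∑' n, a n) :=
  l2.norm_le_of_eq_sqrt_mul (φ := fun t => -Real.sin t) ha hs (by simp [Real.abs_sin_le_one])
    (Hx z) fun n => by rw [(hF z).2.2 n, mul_neg]

lemma IsDriftF.norm_Hu_sub_le (hF : IsDriftF a F) (ha : ∀ n, 0 ≤ a n)
    (hs₂ : Summable fun n : ℕ+ => a n * (n : ℝ) ^ 2) (z z' : Hsp) :
    ‖Hu (F z) - Hu (F z')‖ ≤ √(∑' n : ℕ+, a n * (n : ℝ) ^ 2) * |Hx z - Hx z'| :=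
  l2.norm_sub_le_of_eq_sqrt_mul ha hs₂ Real.lipschitzWith_cos _ _ (hF z).2.1 (hF z').2.1

lemma IsDriftF.norm_Hv_sub_le (hF : IsDriftF a F) (ha : ∀ n, 0 ≤ a n)
    (hs₂ : Summable fun n : ℕ+ => a n * (n : ℝ) ^ 2) (z z' : Hsp) :
    ‖Hv (F z) - Hv (F z')‖ ≤ √(∑' n : ℕ+, a n * (n : ℝ) ^ 2) * |Hx z - Hx z'| :=
  l2.norm_sub_le_of_eq_sqrt_mul ha hs₂ Real.lipschitzWith_sin.neg _ _
    (fun n => by rw [(hF z).2.2 n, Pi.neg_apply, mul_neg])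
    (fun n => by rw [(hF z').2.2 n, Pi.neg_apply, mul_neg])

lemma IsDriftF.norm_sub_le (hF : IsDriftF a F) (ha : ∀ n, 0 ≤ a n) (hO5 : MemO5 a)
    (z z' : Hsp) :
    ‖F z - F z'‖ ≤ (√(∑' n : ℕ+, a n * (n : ℝ) ^ 4) * (‖Hu z‖ + ‖Hv z‖) +
      4 * √(∑' n : ℕ+, a n * (n : ℝ) ^ 2)) * ‖z - z'‖ := by
  have hs₂ := hO5.summable_mul_pow ha (k := 2) (by norm_num)
  have hx := hF.abs_Hx_sub_le ha hs₂ (hO5.summable_mul_pow ha (k := 4) (by norm_num)) z z'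
  have hu := hF.norm_Hu_sub_le ha hs₂ z z'
  have hv := hF.norm_Hv_sub_le ha hs₂ z z'
  have hΔ : |Hx z - Hx z'| ≤ ‖z - z'‖ := by simpa using Hsp.abs_Hx_le (z - z')
  have hdu : ‖Hu z - Hu z'‖ ≤ ‖z - z'‖ := by simpa using Hsp.norm_Hu_le (z - z')
  have hdv : ‖Hv z - Hv z'‖ ≤ ‖z - z'‖ := by simpa using Hsp.norm_Hv_le (z - z')
  calc ‖F z - F z'‖ ≤ |Hx (F z) - Hx (F z')| + ‖Hu (F z) - Hu (F z')‖ + ‖Hv (F z) - Hv (F z')‖ := by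
        simpa using Hsp.norm_le_abs_add_norm_add_norm (F z - F z')
    _ ≤ √(∑' n : ℕ+, a n * (n : ℝ) ^ 4) * (‖Hu z‖ + ‖Hv z‖) * ‖z - z'‖ +
          √(∑' n : ℕ+, a n * (n : ℝ) ^ 2) * (‖z - z'‖ + ‖z - z'‖) +
          √(∑' n : ℕ+, a n * (n : ℝ) ^ 2) * ‖z - z'‖ +
          √(∑' n : ℕ+, a n * (n : ℝ) ^ 2) * ‖z - z'‖ := by
        grw [hx, hu, hv, hΔ, hdu, hdv]
    _ = _ := by ring

lemma IsDriftF.continuous (hF : IsDriftF a F) (ha : ∀ n, 0 ≤ a n) (hO5 : MemO5 a) :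
    Continuous F := by
  refine continuous_iff_continuousAt.2 fun z₀ => continuousAt_of_locally_lipschitz one_pos
    (√(∑' n : ℕ+, a n * (n : ℝ) ^ 4) * (2 * (‖z₀‖ + 1)) + 4 * √(∑' n : ℕ+, a n * (n : ℝ) ^ 2))
    fun z hz => ?_
  rw [dist_eq_norm] at hz
  have hz' : ‖z‖ ≤ ‖z₀‖ + 1 := by linarith [norm_le_norm_add_norm_sub' z z₀]
  rw [dist_eq_norm, dist_eq_norm]
  refine (hF.norm_sub_le ha hO5 z z₀).trans ?_
  gcongr
  linarith [Hsp.norm_Hu_le z, Hsp.norm_Hv_le z]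

end Drift

section Galerkin

variable {P : ℕ+ → Hsp → Hsp}

lemma IsGalerkin.norm_Hu_le (hP : IsGalerkin P) (N : ℕ+) (z : Hsp) : ‖Hu (P N z)‖ ≤ ‖Hu z‖ :=
  l2.norm_le_of_truncation (hP N z).2.1

lemma IsGalerkin.norm_Hv_le (hP : IsGalerkin P) (N : ℕ+) (z : Hsp) : ‖Hv (P N z)‖ ≤ ‖Hv z‖ :=
  l2.norm_le_of_truncation (hP N z).2.2

lemma IsGalerkin.lipschitzWith (hP : IsGalerkin P) (N : ℕ+) : LipschitzWith 1 (P N) := by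
  refine LipschitzWith.of_dist_le_mul fun z z' => ?_
  rw [NNReal.coe_one, one_mul, dist_eq_norm, dist_eq_norm]
  refine Hsp.norm_le_norm_of_components (by simp [(hP N z).1, (hP N z').1])
    (l2.norm_le_of_truncation (N := N) fun n => ?_) (l2.norm_le_of_truncation (N := N) fun n => ?_)
  · simp only [Hu_sub, lp.coeFn_sub, Pi.sub_apply, (hP N z).2.1, (hP N z').2.1]
    split_ifs <;> simp
  · simp only [Hv_sub, lp.coeFn_sub, Pi.sub_apply, (hP N z).2.2, (hP N z').2.2]
    split_ifs <;> simp

lemma IsGalerkin.norm_sub_self_sq (hP : IsGalerkin P) (N : ℕ+) (z : Hsp) :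
    ‖P N z - z‖ ^ 2 = tailSum (fun n => Hu z n ^ 2) N + tailSum (fun n => Hv z n ^ 2) N := by
  rw [Hsp.norm_sq_eq, Hu_sub, Hv_sub, l2.norm_sub_sq_of_truncation (hP N z).2.1,
    l2.norm_sub_sq_of_truncation (hP N z).2.2, Hx_sub, (hP N z).1]
  ring

lemma IsGalerkin.norm_sub_drift_sq_le (hP : IsGalerkin P) {a : ℕ+ → ℝ} {F : Hsp → Hsp}
    (hF : IsDriftF a F) (ha : ∀ n, 0 ≤ a n) (hs : Summable a) (N : ℕ+) (z : Hsp) :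
    ‖P N (F z) - F z‖ ^ 2 ≤ 2 * tailSum a N := by
  have hu := tailSum_mono (l2.summable_sq (Hu (F z))) hs
    (fun n => (hF z).2.1 n ▸ sq_sqrt_mul_le (ha n) (Real.abs_cos_le_one _)) N
  have hv := tailSum_mono (l2.summable_sq (Hv (F z))) hs (fun n => by
    simpa [(hF z).2.2 n] using sq_sqrt_mul_le (ha n) (Real.abs_sin_le_one (n * Hx z))) N
  rw [hP.norm_sub_self_sq]
  linarith

lemma IsGalerkin.norm_map_drift_sub_drift_le (hP : IsGalerkin P) {a : ℕ+ → ℝ} {F : Hsp → Hsp}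
    (hF : IsDriftF a F) (ha : ∀ n, 0 ≤ a n) (hO5 : MemO5 a) (N : ℕ+) {z : Hsp} {R : ℝ}
    (hR : ‖Hu z‖ + ‖Hv z‖ ≤ R) (z' : Hsp) :
    ‖P N (F z) - F z'‖ ≤ (√(∑' n : ℕ+, a n * (n : ℝ) ^ 4) * R +
      4 * √(∑' n : ℕ+, a n * (n : ℝ) ^ 2)) * ‖z - z'‖ + √(2 * tailSum a N) := by
  have htail : ‖P N (F z') - F z'‖ ≤ √(2 * tailSum a N) := by
    simpa using Real.abs_le_sqrt (hP.norm_sub_drift_sq_le hF ha (hO5.summable ha) N z')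
  calc ‖P N (F z) - F z'‖ ≤ ‖P N (F z) - P N (F z')‖ + ‖P N (F z') - F z'‖ :=
        norm_sub_le_norm_sub_add_norm_sub _ _ _
    _ ≤ ‖F z - F z'‖ + √(2 * tailSum a N) := by
        gcongr
        simpa using (hP.lipschitzWith N).norm_sub_le (F z) (F z')
    _ ≤ _ := by
        grw [hF.norm_sub_le ha hO5 z z', hR]

end Galerkin

lemma gronwallBound_le_mul_exp {δ K ε : ℝ} (hε : 0 ≤ ε) (hK : 0 ≤ K) (t : ℝ) :
    gronwallBound δ K ε t ≤ (δ + ε * t) * Real.exp (K * t) := by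
  rcases hK.eq_or_lt with rfl | hK
  · simp [gronwallBound_K0]
  have hexp : Real.exp (K * t) - 1 ≤ K * t * Real.exp (K * t) := by
    have h := mul_le_mul_of_nonneg_right (Real.one_sub_le_exp_neg (K * t))
      (Real.exp_pos (K * t)).le
    rw [← Real.exp_add, neg_add_cancel, Real.exp_zero] at h
    linarith
  calc gronwallBound δ K ε t = δ * Real.exp (K * t) + ε / K * (Real.exp (K * t) - 1) := by
        rw [gronwallBound_of_K_ne_0 hK.ne']
    _ ≤ δ * Real.exp (K * t) + ε / K * (K * t * Real.exp (K * t)) := by gcongr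
    _ = (δ + ε * t) * Real.exp (K * t) := by field_simp

section Gronwall

variable {E : Type*} [NormedAddCommGroup E] [NormedSpace ℝ E] [CompleteSpace E]

lemma hasDerivWithinAt_const_add_setIntegral_Ioc {g : ℝ → E} (d : E)
    (hg : ContinuousOn g (Ici 0)) {t : ℝ} (ht : 0 ≤ t) :
    HasDerivWithinAt (fun u => d + ∫ s in Ioc 0 u, g s) (g t) (Ici t) t := by
  have hnhds : Ici 0 ∈ 𝓝[>] t := mem_of_superset self_mem_nhdsWithin fun s hs => ht.trans hs.le
  have hprim := intervalIntegral.integral_hasDerivWithinAt_right (a := 0) (s := Ici t) (t := Ioi t)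
    ((hg.mono Icc_subset_Ici_self).intervalIntegrable_of_Icc ht)
    ⟨Ici 0, hnhds, hg.aestronglyMeasurable measurableSet_Ici⟩
    ((hg t ht).mono_of_mem_nhdsWithin hnhds)
  refine (hprim.const_add d).congr (fun u hu => ?_) ?_
  · rw [intervalIntegral.integral_of_le (ht.trans hu)]
  · rw [intervalIntegral.integral_of_le ht]

lemma norm_le_gronwallBound_of_eq_add_integral {D g : ℝ → E} {d : E} {δ K ε T : ℝ}
    (hDc : ContinuousOn D (Icc 0 T)) (hg : ContinuousOn g (Ici 0))
    (hD : ∀ t ≥ 0, D t = d + ∫ s in Ioc 0 t, g s) (hd : ‖d‖ ≤ δ)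
    (hbound : ∀ t ∈ Ico 0 T, ‖g t‖ ≤ K * ‖D t‖ + ε) :
    ∀ t ∈ Icc 0 T, ‖D t‖ ≤ gronwallBound δ K ε t := by
  have hderiv (t : ℝ) (ht : t ∈ Ico 0 T) : HasDerivWithinAt D (g t) (Ici t) t :=
    (hasDerivWithinAt_const_add_setIntegral_Ioc d hg ht.1).congr
      (fun u hu => hD u (ht.1.trans hu)) (hD t ht.1)
  have hD0 : D 0 = d := by simp [hD 0 le_rfl]
  simpa using norm_le_gronwallBound_of_norm_deriv_right_le hDc hderiv (hD0 ▸ hd) hbound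

end Gronwall

lemma integrableOn_Ioc_of_continuousOn_Ici {E : Type*} [NormedAddCommGroup E] {G : ℝ → E}
    (hG : ContinuousOn G (Ici 0)) (t : ℝ) : IntegrableOn G (Ioc 0 t) :=
  (hG.mono Icc_subset_Ici_self).integrableOn_Icc.mono_set Ioc_subset_Icc_self

lemma norm_map_add_setIntegral_Ioc_add_le {E E' : Type*} [NormedAddCommGroup E]
    [NormedSpace ℝ E] [CompleteSpace E] [NormedAddCommGroup E'] [NormedSpace ℝ E']
    [CompleteSpace E'] (L : E →L[ℝ] E') {G : ℝ → E} {z e : E} {M t : ℝ} (ht : 0 ≤ t)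
    (hG : IntegrableOn G (Ioc 0 t)) (hGM : ∀ s, ‖L (G s)‖ ≤ M) (he : L e = 0) :
    ‖L (z + (∫ s in Ioc 0 t, G s) + e)‖ ≤ ‖L z‖ + M * t := by
  rw [map_add, map_add, he, add_zero, ← L.integral_comp_comm hG]
  grw [norm_add_le]
  gcongr
  simpa [Real.volume_real_Ioc_of_le ht] using
    norm_setIntegral_le_of_norm_le_const (s := Ioc 0 t) (μ := volume) measure_Ioc_lt_top
      fun s _ => hGM s

section GalerkinError

variable {a : ℕ+ → ℝ} {F : Hsp → Hsp} {P : ℕ+ → Hsp → Hsp} {w : ℝ → ℝ} {y : Hsp}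
  {Y : ℝ → Hsp} {YN : ℕ+ → ℝ → Hsp}

lemma norm_Hu_add_norm_Hv_galerkin_le (hF : IsDriftF a F) (ha : ∀ n, 0 ≤ a n) (hO5 : MemO5 a)
    (hP : IsGalerkin P) (N : ℕ+) (hYNc : ContinuousOn (YN N) (Ici 0))
    (hYN : ∀ t ≥ (0 : ℝ),
      YN N t = P N y + (∫ s in Ioc (0 : ℝ) t, P N (F (YN N s))) + mkH (w t) 0 0)
    {t : ℝ} (ht : 0 ≤ t) :
    ‖Hu (YN N t)‖ + ‖Hv (YN N t)‖ ≤ 2 * (‖y‖ + √(∑' n, a n) * t) := by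
  have hs := hO5.summable ha
  have hG : IntegrableOn (fun s => P N (F (YN N s))) (Ioc 0 t) :=
    integrableOn_Ioc_of_continuousOn_Ici
      (((hP.lipschitzWith N).continuous.comp (hF.continuous ha hO5)).comp_continuousOn hYNc) t
  have hu := norm_map_add_setIntegral_Ioc_add_le HuL (z := P N y) (e := mkH (w t) 0 0) ht hG
    (fun s => (hP.norm_Hu_le N _).trans (hF.norm_Hu_le ha hs _)) rfl
  have hv := norm_map_add_setIntegral_Ioc_add_le HvL (z := P N y) (e := mkH (w t) 0 0) ht hG
    (fun s => (hP.norm_Hv_le N _).trans (hF.norm_Hv_le ha hs _)) rfl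
  rw [← hYN t ht, HuL_apply, HuL_apply] at hu
  rw [← hYN t ht, HvL_apply, HvL_apply] at hv
  linarith [(hP.norm_Hu_le N y).trans (Hsp.norm_Hu_le y),
    (hP.norm_Hv_le N y).trans (Hsp.norm_Hv_le y)]

lemma exists_norm_galerkin_sub_le (hF : IsDriftF a F) (ha : ∀ n, 0 ≤ a n) (hO5 : MemO5 a)
    (hP : IsGalerkin P) (hYc : ContinuousOn Y (Ici 0))
    (hY : ∀ t ≥ (0 : ℝ), Y t = y + (∫ s in Ioc (0 : ℝ) t, F (Y s)) + mkH (w t) 0 0)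
    (hYNc : ∀ N : ℕ+, ContinuousOn (YN N) (Ici 0))
    (hYN : ∀ N : ℕ+, ∀ t ≥ (0 : ℝ),
      YN N t = P N y + (∫ s in Ioc (0 : ℝ) t, P N (F (YN N s))) + mkH (w t) 0 0)
    {T : ℝ} (hT : 0 ≤ T) :
    ∃ K ≥ (0 : ℝ), ∀ N : ℕ+, ∀ t ∈ Icc 0 T,
      ‖YN N t - Y t‖ ≤ (‖P N y - y‖ + √(2 * tailSum a N) * T) * Real.exp (K * T) := by
  set S₂ := √(∑' n : ℕ+, a n * (n : ℝ) ^ 2)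
  set S₄ := √(∑' n : ℕ+, a n * (n : ℝ) ^ 4)
  set R := ‖y‖ + √(∑' n, a n) * T
  refine ⟨S₄ * (2 * R) + 4 * S₂, by positivity, fun N t ht => ?_⟩
  have hFc := hF.continuous ha hO5
  have hGN : ContinuousOn (fun s => P N (F (YN N s))) (Ici 0) :=
    ((hP.lipschitzWith N).continuous.comp hFc).comp_continuousOn (hYNc N)
  have hG : ContinuousOn (fun s => F (Y s)) (Ici 0) := hFc.comp_continuousOn hYc
  have hD (t : ℝ) (ht : t ≥ 0) : YN N t - Y t =
      (P N y - y) + ∫ s in Ioc 0 t, (P N (F (YN N s)) - F (Y s)) := by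
    rw [hYN N t ht, hY t ht, integral_sub (integrableOn_Ioc_of_continuousOn_Ici hGN t)
      (integrableOn_Ioc_of_continuousOn_Ici hG t)]
    abel
  have hbound (s : ℝ) (hs' : s ∈ Ico 0 T) : ‖P N (F (YN N s)) - F (Y s)‖ ≤
      (S₄ * (2 * R) + 4 * S₂) * ‖YN N s - Y s‖ + √(2 * tailSum a N) := by
    refine hP.norm_map_drift_sub_drift_le hF ha hO5 N ?_ (Y s)
    refine (norm_Hu_add_norm_Hv_galerkin_le (w := w) hF ha hO5 hP N (hYNc N) (hYN N) hs'.1).trans ?_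
    show 2 * (‖y‖ + √(∑' n, a n) * s) ≤ 2 * (‖y‖ + √(∑' n, a n) * T)
    gcongr
    exact hs'.2.le
  have hDc : ContinuousOn (fun t => YN N t - Y t) (Icc 0 T) :=
    ((hYNc N).sub hYc).mono Icc_subset_Ici_self
  calc ‖YN N t - Y t‖
      ≤ gronwallBound ‖P N y - y‖ (S₄ * (2 * R) + 4 * S₂) √(2 * tailSum a N) t :=
        norm_le_gronwallBound_of_eq_add_integral hDc (hGN.sub hG) hD le_rfl hbound t ht
    _ ≤ (‖P N y - y‖ + √(2 * tailSum a N) * t) * Real.exp ((S₄ * (2 * R) + 4 * S₂) * t) :=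
        gronwallBound_le_mul_exp (Real.sqrt_nonneg _) (by positivity) t
    _ ≤ _ := by gcongr <;> exact ht.2

end GalerkinError

lemma sq_add_sqrt_mul_mul_exp_le {δ τ T K : ℝ} (hτ : 0 ≤ τ) :
    ((δ + √(2 * τ) * T) * Real.exp (K * T)) ^ 2 ≤
      (δ ^ 2 + 2 * T * T * τ) * Real.exp (2 * (K * T) + 1) := by
  have hsq : (δ + √(2 * τ) * T) ^ 2 ≤ 2 * (δ ^ 2 + 2 * T * T * τ) :=
    calc (δ + √(2 * τ) * T) ^ 2 ≤ 2 * δ ^ 2 + 2 * (√(2 * τ) * T) ^ 2 := by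
          nlinarith [sq_nonneg (δ - √(2 * τ) * T)]
      _ = 2 * (δ ^ 2 + 2 * T * T * τ) := by rw [mul_pow, Real.sq_sqrt (by positivity)]; ring
  have he : (2 : ℝ) ≤ Real.exp 1 := by linarith [Real.add_one_le_exp 1]
  have hnonneg : 0 ≤ δ ^ 2 + 2 * T * T * τ := by nlinarith [mul_self_nonneg T]
  calc ((δ + √(2 * τ) * T) * Real.exp (K * T)) ^ 2
      = (δ + √(2 * τ) * T) ^ 2 * Real.exp (K * T) ^ 2 := by ring
    _ ≤ 2 * (δ ^ 2 + 2 * T * T * τ) * Real.exp (K * T) ^ 2 := by gcongr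
    _ ≤ Real.exp 1 * (δ ^ 2 + 2 * T * T * τ) * Real.exp (K * T) ^ 2 := by gcongr
    _ = (δ ^ 2 + 2 * T * T * τ) * Real.exp (2 * (K * T) + 1) := by
        rw [Real.exp_add, ← Real.exp_nat_mul]; push_cast; ring

lemma tendsto_iSup_of_sq_le {α ι : Type*} {l : Filter α} {f : α → ι → ℝ} {b : α → ℝ}
    (h : ∀ N i, f N i ^ 2 ≤ b N) (hf : ∀ N i, 0 ≤ f N i) (hb : Tendsto b l (𝓝 0)) :
    Tendsto (fun N => ⨆ i, f N i) l (𝓝 0) :=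
  squeeze_zero (fun N => Real.iSup_nonneg (hf N))
    (fun N => Real.iSup_le (fun i => (le_abs_self _).trans (Real.abs_le_sqrt (h N i)))
      (Real.sqrt_nonneg _))
    (by simpa using hb.sqrt)

theorem stmt11_general (a : ℕ+ → ℝ) (hpos : ∀ n, 0 < a n) (hO5 : MemO5 a)
    (F : Hsp → Hsp) (hF : IsDriftF a F)
    (P : ℕ+ → Hsp → Hsp) (hP : IsGalerkin P)
    (w : ℝ → ℝ) (y : Hsp)
    (Y : ℝ → Hsp) (hYc : ContinuousOn Y (Set.Ici 0))
    (hY : ∀ t ≥ (0 : ℝ),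
      Y t = y + (∫ s in Set.Ioc (0 : ℝ) t, F (Y s)) + mkH (w t) 0 0)
    (YN : ℕ+ → ℝ → Hsp) (hYNc : ∀ N : ℕ+, ContinuousOn (YN N) (Set.Ici 0))
    (hYN : ∀ N : ℕ+, ∀ t ≥ (0 : ℝ),
      YN N t = P N y + (∫ s in Set.Ioc (0 : ℝ) t, P N (F (YN N s))) + mkH (w t) 0 0) :
    ∀ T > (0 : ℝ),
      (∃ C > (0 : ℝ), ∃ C' > (0 : ℝ), ∀ N : ℕ+, ∀ t ∈ Set.Icc (0 : ℝ) T,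
        ‖YN N t - Y t‖ ^ 2 ≤
          (‖P N y - y‖ ^ 2 + C * T * ∑' n : ℕ+, if N < n then a n else 0) *
            Real.exp C') ∧
      Filter.Tendsto (fun N : ℕ+ => ⨆ t : Set.Icc (0 : ℝ) T, ‖YN N t - Y t‖)
        Filter.atTop (nhds 0) := by
  intro T hT
  have ha (n : ℕ+) : 0 ≤ a n := (hpos n).le
  obtain ⟨K, hK, hbound⟩ := exists_norm_galerkin_sub_le hF ha hO5 hP hYc hY hYNc hYN hT.le
  have hsq (N : ℕ+) (t : ℝ) (ht : t ∈ Icc 0 T) : ‖YN N t - Y t‖ ^ 2 ≤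
      (‖P N y - y‖ ^ 2 + 2 * T * T * tailSum a N) * Real.exp (2 * (K * T) + 1) :=
    (pow_le_pow_left₀ (norm_nonneg _) (hbound N t ht) 2).trans
      (sq_add_sqrt_mul_mul_exp_le (tailSum_nonneg ha N))
  refine ⟨⟨2 * T, by positivity, 2 * (K * T) + 1, by positivity, hsq⟩,
    tendsto_iSup_of_sq_le (fun N t => hsq N t t.2) (fun N t => norm_nonneg _) ?_⟩
  have hs := hO5.summable ha
  have hPy : Tendsto (fun N => ‖P N y - y‖ ^ 2) atTop (𝓝 0) := by
    simpa [hP.norm_sub_self_sq] using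
      (tendsto_tailSum (l2.summable_sq (Hu y))).add (tendsto_tailSum (l2.summable_sq (Hv y)))
  simpa using (hPy.add ((tendsto_tailSum hs).const_mul (2 * T * T))).mul_const
    (Real.exp (2 * (K * T) + 1))

/-- If `Y` solves `Y(t) = y + ∫₀ᵗ F(Y(s))ds + (w(t),0,0)` and, for
each `N`, `Y^{(N)}` solves the Galerkin equation
`Y^{(N)}(t) = Π_N y + ∫₀ᵗ Π_N F(Y^{(N)}(s))ds + (w(t),0,0)`, then for every `T > 0`
there are constants `C, C(y,T) > 0` with
`sup_{0≤t≤T} ‖Y^{(N)}(t) − Y(t)‖² ≤ (‖Π_N y − y‖² + C T Σ_{n>N} aₙ) e^{C(y,T)}`;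
in particular `sup_{0≤t≤T} ‖Y^{(N)}(t) − Y(t)‖ → 0` as `N → ∞`. -/
theorem stmt11 (a : ℕ+ → ℝ) (hpos : ∀ n, 0 < a n) (hO5 : MemO5 a)
    (F : Hsp → Hsp) (hF : IsDriftF a F)
    (P : ℕ+ → Hsp → Hsp) (hP : IsGalerkin P)
    (w : ℝ → ℝ) (hw : ContinuousOn w (Set.Ici 0)) (y : Hsp)
    (Y : ℝ → Hsp) (hYc : ContinuousOn Y (Set.Ici 0))
    (hY : ∀ t ≥ (0 : ℝ),
      Y t = y + (∫ s in Set.Ioc (0 : ℝ) t, F (Y s)) + mkH (w t) 0 0)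
    (YN : ℕ+ → ℝ → Hsp) (hYNc : ∀ N : ℕ+, ContinuousOn (YN N) (Set.Ici 0))
    (hYN : ∀ N : ℕ+, ∀ t ≥ (0 : ℝ),
      YN N t = P N y + (∫ s in Set.Ioc (0 : ℝ) t, P N (F (YN N s))) + mkH (w t) 0 0) :
    ∀ T > (0 : ℝ),
      (∃ C > (0 : ℝ), ∃ C' > (0 : ℝ), ∀ N : ℕ+, ∀ t ∈ Set.Icc (0 : ℝ) T,
        ‖YN N t - Y t‖ ^ 2 ≤
          (‖P N y - y‖ ^ 2 + C * T * ∑' n : ℕ+, if N < n then a n else 0) *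
            Real.exp C') ∧
      Filter.Tendsto (fun N : ℕ+ => ⨆ t : Set.Icc (0 : ℝ) T, ‖YN N t - Y t‖)
        Filter.atTop (nhds 0) :=
  stmt11_general a hpos hO5 F hF P hP w y Y hYc hY YN hYNc hYN
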